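/- arXiv:2405.16342 — 5 statements merged into one kernel-verified Lean document; each statement's English description precedes it below -/
import Mathlib

section
/- Let R be an algebra over a field of characteristic p > 0, let σ be a locally torsion automorphism of R, and let D be a locally nilpotent σ-derivation on R such that σD = Dσ. Then J(R[x;σ,D]) ∩ R is a nil ideal of R. -/
/-- `S` is (a copy of) the Ore extension `R[x;σ,D]` of `R`: `ι : R → S` is the inclusion of
coefficients, `X ∈ S` is the variable, every element of `S` is uniquely a polynomial
`Σᵢ ι(aᵢ) * Xⁱ`, and multiplication is governed by `X * a = σ(a) * X + D(a)`. -/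
structure IsOreExtension {R S : Type*} [Ring R] [Ring S]
    (σ : R → R) (D : R → R) (ι : R → S) (X : S) : Prop where
  σ_add : ∀ a b : R, σ (a + b) = σ a + σ b
  σ_mul : ∀ a b : R, σ (a * b) = σ a * σ b
  σ_one : σ 1 = 1
  D_add : ∀ a b : R, D (a + b) = D a + D b
  D_mul : ∀ a b : R, D (a * b) = σ a * D b + D a * b
  ι_add : ∀ a b : R, ι (a + b) = ι a + ι b
  ι_mul : ∀ a b : R, ι (a * b) = ι a * ι b
  ι_one : ι 1 = 1
  X_comm : ∀ a : R, X * ι a = ι (σ a) * X + ι (D a)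
  repr : ∀ s : S, ∃ c : ℕ →₀ R, s = c.sum fun i a => ι a * X ^ i
  uniq : ∀ c : ℕ →₀ R, (c.sum fun i a => ι a * X ^ i) = 0 → c = 0

/-!
Let `ι r ∈ J(S)`, with `σⁿ r = r` and `Dᵐ r = 0`, and put `q = pᵐ`. In characteristic `p` the
Leibniz expansion `X^q r = Σ (q choose i) σⁱ D^(q-i)(r) Xⁱ` collapses to `σ^q(r) X^q`, so `X^(qn)`
commutes with `r` and `t = r X^(qn)` lies in `J(S)`. A left inverse `u` of `1 - t` satisfies
`u = 1 + t + ⋯ + tᵏ + u t^(k+1)` for every `k`; comparing the coefficients of `X^(qnk)` for `k`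
beyond the degree of `u` gives `rᵏ = 0`.
-/

open Finset

theorem eq_geom_sum_add_mul_pow_of_mul_one_sub_eq_one {A : Type*} [Ring A] {u t : A}
    (hu : u * (1 - t) = 1) (n : ℕ) : u = ∑ i ∈ range n, t ^ i + u * t ^ n := by
  have hgeom : ∑ i ∈ range n, t ^ i = u * (1 - t ^ n) := by
    rw [← mul_neg_geom_sum, ← mul_assoc, hu, one_mul]
  rw [hgeom, mul_sub, mul_one, sub_add_cancel]

theorem exists_mul_one_sub_eq_one_of_mem_jacobson_bot {A : Type*} [Ring A] {x : A}
    (hx : x ∈ (⊥ : Ideal A).jacobson) : ∃ u, u * (1 - x) = 1 := by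
  obtain ⟨u, hu⟩ := Ideal.exists_mul_add_sub_mem_of_mem_jacobson (-x) (neg_mem hx)
  exact ⟨u, by rwa [Ideal.mem_bot, sub_eq_zero, neg_add_eq_sub] at hu⟩

theorem pow_mul_eq_mul_pow_of_forall_mul_eq {M : Type*} [Monoid M] {y : M} {f : ℕ → M}
    (hf : ∀ i, y * f i = f (i + 1) * y) (k : ℕ) : y ^ k * f 0 = f k * y ^ k := by
  induction k with
  | zero => simp
  | succ k ih => rw [pow_succ', mul_assoc, ih, ← mul_assoc, hf, mul_assoc, ← pow_succ']

namespace IsOreExtension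

variable {R S : Type*} [Ring R] [Ring S] {σ D : R → R} {ι : R → S} {X : S}
  (h : IsOreExtension σ D ι X)
include h

def ιHom : R →+* S := RingHom.mk' ⟨⟨ι, h.ι_one⟩, h.ι_mul⟩ h.ι_add

theorem ι_zero : ι 0 = 0 := map_zero h.ιHom

theorem σ_zero : σ 0 = 0 := map_zero (AddMonoidHom.mk' σ h.σ_add)

theorem D_zero : D 0 = 0 := map_zero (AddMonoidHom.mk' D h.D_add)

theorem iterate_D_eq_zero_of_le {m t : ℕ} (hmt : m ≤ t) {a : R} (ha : D^[m] a = 0) :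
    D^[t] a = 0 := by
  obtain ⟨s, rfl⟩ := Nat.exists_eq_add_of_le hmt
  rw [add_comm, Function.iterate_add_apply, ha, Function.iterate_fixed h.D_zero]

noncomputable def ofFinsupp : (ℕ →₀ R) →+ S :=
  Finsupp.liftAddHom fun i => (AddMonoidHom.mulRight (X ^ i)).comp h.ιHom.toAddMonoidHom

theorem ofFinsupp_single (i : ℕ) (a : R) : h.ofFinsupp (Finsupp.single i a) = ι a * X ^ i :=
  Finsupp.liftAddHom_apply_single _ _ _

theorem ofFinsupp_bijective : Function.Bijective h.ofFinsupp :=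
  ⟨(injective_iff_map_eq_zero _).mpr fun c hc =>
      h.uniq c (by rwa [ofFinsupp, Finsupp.liftAddHom_apply] at hc),
    fun s => (h.repr s).imp fun c hc => by rw [hc, ofFinsupp, Finsupp.liftAddHom_apply]; rfl⟩

noncomputable def coeff (n : ℕ) : S →+ R :=
  (Finsupp.applyAddHom n).comp (AddEquiv.ofBijective _ h.ofFinsupp_bijective).symm.toAddMonoidHom

theorem coeff_ofFinsupp (n : ℕ) (c : ℕ →₀ R) : h.coeff n (h.ofFinsupp c) = c n := by
  simpa [coeff] using congrArg (· n)
    ((AddEquiv.ofBijective _ h.ofFinsupp_bijective).symm_apply_apply c)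

theorem coeff_ι_mul_X_pow (n i : ℕ) (a : R) :
    h.coeff n (ι a * X ^ i) = Finsupp.single i a n := by
  rw [← h.ofFinsupp_single, coeff_ofFinsupp]

theorem coeff_mul_X_pow_of_lt (s : S) {n L : ℕ} (hn : n < L) : h.coeff n (s * X ^ L) = 0 := by
  obtain ⟨c, rfl⟩ := h.ofFinsupp_bijective.2 s
  induction c using Finsupp.induction_linear with
  | zero => simp
  | add c d hc hd => rw [map_add, add_mul, map_add, hc, hd, add_zero]
  | single i a =>
    rw [ofFinsupp_single, mul_assoc, ← pow_add, coeff_ι_mul_X_pow,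
      Finsupp.single_eq_of_ne (by omega)]

theorem exists_coeff_eq_zero_of_le (s : S) : ∃ k, ∀ n, k ≤ n → h.coeff n s = 0 := by
  obtain ⟨c, rfl⟩ := h.ofFinsupp_bijective.2 s
  refine ⟨c.support.sup id + 1, fun n hn => ?_⟩
  rw [coeff_ofFinsupp, ← Finsupp.notMem_support_iff]
  intro hmem
  have := le_sup (f := id) hmem
  simp only [id_eq] at this
  omega

theorem isNilpotent_of_mul_one_sub_eq_one {r : R} {N : ℕ} (hN : 0 < N)
    (hrX : Commute (ι r) (X ^ N)) {u : S} (hu : u * (1 - ι r * X ^ N) = 1) : IsNilpotent r := by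
  have hpow : ∀ j, (ι r * X ^ N) ^ j = ι (r ^ j) * X ^ (N * j) := fun j => by
    rw [hrX.mul_pow, pow_mul]
    exact congrArg (· * _) (map_pow h.ιHom r j).symm
  obtain ⟨k, hk⟩ := h.exists_coeff_eq_zero_of_le u
  have hcoeff := congrArg (h.coeff (N * k))
    (eq_geom_sum_add_mul_pow_of_mul_one_sub_eq_one hu (k + 1))
  rw [hk _ (Nat.le_mul_of_pos_left k hN), map_add, hpow, ← mul_assoc,
    h.coeff_mul_X_pow_of_lt _ ((Nat.mul_lt_mul_left hN).mpr k.lt_succ_self), add_zero, map_sum,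
    sum_eq_single k] at hcoeff
  · exact ⟨k, by rw [hcoeff, hpow, coeff_ι_mul_X_pow, Finsupp.single_eq_same]⟩
  · intro j _ hjk
    rw [hpow, coeff_ι_mul_X_pow, Finsupp.single_eq_of_ne]
    exact fun hj => hjk (Nat.eq_of_mul_eq_mul_left hN hj).symm
  · simp

section commuting
variable (hcomm : Function.Commute σ D)
include hcomm

theorem X_pow_mul (K : ℕ) (a : R) :
    X ^ K * ι a =
      ∑ ij ∈ antidiagonal K, K.choose ij.1 • (ι (σ^[ij.1] (D^[ij.2] a)) * X ^ ij.1) := by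
  induction K with
  | zero => simp
  | succ K ih =>
    rw [sum_antidiagonal_choose_succ_nsmul (fun i j => ι (σ^[i] (D^[j] a)) * X ^ i) K,
      pow_succ', mul_assoc, ih, mul_sum, add_comm]
    simp only [mul_smul_comm, ← mul_assoc, h.X_comm, add_mul, smul_add, sum_add_distrib]
    congr 1 <;> refine sum_congr rfl fun ⟨i, j⟩ hij => ?_
    · rw [mul_assoc, ← pow_succ', ← Function.iterate_succ_apply' σ,
        K.choose_symm_of_eq_add (mem_antidiagonal.1 hij).symm]
    · rw [← (hcomm.iterate_left i).eq, ← Function.iterate_succ_apply' D]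

theorem X_pow_prime_pow_mul {p : ℕ} (hp : p.Prime) (hpR : (p : R) = 0) (e : ℕ) {a : R}
    (ha : D^[p ^ e] a = 0) : X ^ p ^ e * ι a = ι (σ^[p ^ e] a) * X ^ p ^ e := by
  have hpS : (p : S) = 0 := by rw [← map_natCast h.ιHom, hpR, map_zero]
  rw [h.X_pow_mul hcomm, sum_eq_single (p ^ e, 0)]
  · simp
  · rintro ⟨i, j⟩ hij hne
    rw [HasAntidiagonal.mem_antidiagonal] at hij
    rcases Nat.eq_zero_or_pos i with rfl | hi
    · obtain rfl : j = p ^ e := by simpa using hij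
      dsimp only
      rw [ha, Function.iterate_zero_apply, h.ι_zero, zero_mul, smul_zero]
    · have hie : i ≠ p ^ e := by rintro rfl; simp_all
      obtain ⟨c, hc⟩ := hp.dvd_choose_pow hi.ne' hie
      rw [hc, nsmul_eq_mul, Nat.cast_mul, hpS, zero_mul, zero_mul]
  · simp

theorem commute_ι_X_pow {p : ℕ} (hp : p.Prime) (hpR : (p : R) = 0) {a : R} {n m : ℕ}
    (hσ : σ^[n] a = a) (hD : D^[m] a = 0) : Commute (ι a) (X ^ (p ^ m * n)) := by
  have hDq : ∀ i, D^[p ^ m] (σ^[i] a) = 0 := fun i => by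
    rw [← (hcomm.iterate_iterate i (p ^ m)).eq,
      h.iterate_D_eq_zero_of_le (Nat.lt_pow_self hp.one_lt).le hD,
      Function.iterate_fixed h.σ_zero]
  have hstep : ∀ i, X ^ p ^ m * ι (σ^[p ^ m * i] a) = ι (σ^[p ^ m * (i + 1)] a) * X ^ p ^ m :=
    fun i => by
      rw [h.X_pow_prime_pow_mul hcomm hp hpR m (hDq _), ← Function.iterate_add_apply, mul_add,
        mul_one, add_comm]
  have hXa := pow_mul_eq_mul_pow_of_forall_mul_eq hstep n
  rw [mul_zero, Function.iterate_zero_apply, mul_comm, Function.iterate_mul,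
    Function.iterate_fixed hσ, ← pow_mul] at hXa
  exact hXa.symm

end commuting

end IsOreExtension

theorem jacobson_cap_nil_of_locallyNilpotent_general {F R S : Type*} [Field F]
    (p : ℕ) (hp : p ≠ 0) [CharP F p]
    [Ring R] [Algebra F R] [Ring S]
    (σ D : R → R) (ι : R → S) (X : S)
    (hOre : IsOreExtension σ D ι X)
    (htor : ∀ a : R, ∃ n : ℕ, 0 < n ∧ σ^[n] a = a)
    (hnilp : ∀ a : R, ∃ m : ℕ, 0 < m ∧ D^[m] a = 0)
    (hcomm : ∀ a : R, σ (D a) = D (σ a)) :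
    ∃ I : TwoSidedIdeal R,
      (∀ r : R, r ∈ I ↔ ι r ∈ (⊥ : Ideal S).jacobson) ∧ ∀ r ∈ I, IsNilpotent r := by
  have hp' : p.Prime := (CharP.char_is_prime_or_zero F p).resolve_right hp
  have hpR : (p : R) = 0 := by rw [← map_natCast (algebraMap F R), CharP.cast_eq_zero, map_zero]
  refine ⟨TwoSidedIdeal.comap hOre.ιHom (⊥ : Ideal S).jacobson.toTwoSided,
    fun r => by rw [TwoSidedIdeal.mem_comap, Ideal.mem_toTwoSided]; rfl, fun r hr => ?_⟩
  rw [TwoSidedIdeal.mem_comap, Ideal.mem_toTwoSided] at hr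
  obtain ⟨n, hn, hσn⟩ := htor r
  obtain ⟨m, -, hDm⟩ := hnilp r
  have hrX := hOre.commute_ι_X_pow hcomm hp' hpR hσn hDm
  obtain ⟨u, hu⟩ := exists_mul_one_sub_eq_one_of_mem_jacobson_bot
    (hrX.eq ▸ Ideal.mul_mem_left _ (X ^ (p ^ m * n)) hr)
  exact hOre.isNilpotent_of_mul_one_sub_eq_one (Nat.mul_pos (pow_pos hp'.pos m) hn) hrX hu

/-- If `R` is an algebra over a field of characteristic `p > 0`, `σ` is a locally torsion
automorphism of `R` and `D` is a locally nilpotent `σ`-derivation with `σD = Dσ`, then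
`J(R[x;σ,D]) ∩ R` is a nil (two-sided) ideal of `R`. -/
theorem jacobson_cap_nil_of_locallyNilpotent {F R S : Type*} [Field F]
    (p : ℕ) (hp : p ≠ 0) [CharP F p]
    [Ring R] [Algebra F R] [Ring S]
    (σ D : R → R) (ι : R → S) (X : S)
    (hOre : IsOreExtension σ D ι X) (hσ : Function.Bijective σ)
    (htor : ∀ a : R, ∃ n : ℕ, 0 < n ∧ σ^[n] a = a)
    (hnilp : ∀ a : R, ∃ m : ℕ, 0 < m ∧ D^[m] a = 0)
    (hcomm : ∀ a : R, σ (D a) = D (σ a)) :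
    ∃ I : TwoSidedIdeal R,
      (∀ r : R, r ∈ I ↔ ι r ∈ (⊥ : Ideal S).jacobson) ∧ ∀ r ∈ I, IsNilpotent r :=
  jacobson_cap_nil_of_locallyNilpotent_general (F := F) p hp σ D ι X hOre htor hnilp hcomm
end

section
/- Let q be an element of a field F that is a primitive m-th root of unity for a positive integer m. Then for all non-negative integers k and j, the Gaussian binomial coefficient [km choose jm]_q equals the ordinary binomial coefficient C(k, j) (as an element of F). -/
/-
Clearing denominators gives, in `ℤ[t]`,
`[n, r + s] · ∏_{b<s} (t^{r+b+1} − 1) = [n, r] · ∏_{b<s} (t^{n−r−b} − 1)`.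
For `n = km`, `r = jm`, `s = m` each block of `m` factors contains exactly one factor divisible by
`t^m − 1`, namely `t^{(j+1)m} − 1`, resp. `t^{(k−j)m} − 1`. Cancelling `t^m − 1` and evaluating at a
primitive `m`-th root `ζ`, the remaining factors give the same nonzero product on both sides and
the quotients `(t^{cm} − 1)/(t^m − 1)` give `c`, so `(j + 1) [km, (j+1)m]_ζ = (k − j) [km, jm]_ζ`.
Dividing by `j + 1` needs characteristic zero, so we run this recursion at a complex `ζ` to get
`[km, jm]_ζ = C(k, j)`; hence the cyclotomic polynomial `Φ_m`, the minimal polynomial of `ζ` over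
`ℤ`, divides `[km, jm] − C(k, j)` in `ℤ[t]`, and this specializes to any field, where `Φ_m(q) = 0`.
-/

open Polynomial in
/-- The Gaussian binomial coefficient `[k choose j]_t`, as a polynomial in `ℤ[t]`: the exact
quotient `((t^k−1)(t^{k−1}−1)⋯(t^{k−j+1}−1)) / ((t^j−1)(t^{j−1}−1)⋯(t−1))`. -/
noncomputable def gaussBinomial (k j : ℕ) : Polynomial ℤ :=
  (∏ i ∈ Finset.range j, (X ^ (k - i) - 1)) /ₘ (∏ i ∈ Finset.range j, (X ^ (i + 1) - 1))

open Polynomial Finset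

section Products

variable {R : Type*} [CommRing R]

theorem prod_range_X_pow_sub_sub_one_eq_zero {n r : ℕ} (h : n < r) :
    ∏ i ∈ range r, ((X : R[X]) ^ (n - i) - 1) = 0 :=
  prod_eq_zero (mem_range.2 h) (by rw [Nat.sub_self, pow_zero, sub_self])

-- From `t^{n+1} − 1 = (t^{s+1} − 1) + t^{s+1} (t^{n−s} − 1)`: the q-Pascal rule for numerators.
theorem prod_range_X_pow_sub_sub_one_succ_succ (n s : ℕ) :
    ∏ i ∈ range (s + 1), ((X : R[X]) ^ (n + 1 - i) - 1) =
      (∏ i ∈ range s, ((X : R[X]) ^ (n - i) - 1)) * (X ^ (s + 1) - 1) +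
        X ^ (s + 1) * ∏ i ∈ range (s + 1), ((X : R[X]) ^ (n - i) - 1) := by
  rcases lt_or_ge n s with hns | hsn
  · rw [prod_range_X_pow_sub_sub_one_eq_zero (by omega : n + 1 < s + 1),
      prod_range_X_pow_sub_sub_one_eq_zero hns, prod_range_X_pow_sub_sub_one_eq_zero (by omega)]
    ring
  · have hsplit :
        (X : R[X]) ^ (n + 1) - 1 = (X ^ (s + 1) - 1) + X ^ (s + 1) * (X ^ (n - s) - 1) := by
      rw [mul_sub, ← pow_add, Nat.add_right_comm, Nat.add_sub_cancel' hsn]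
      ring
    rw [prod_range_succ', prod_range_succ]
    simp only [Nat.add_sub_add_right, Nat.sub_zero, hsplit]
    ring

theorem prod_range_X_pow_succ_sub_one_dvd (n r : ℕ) :
    ∏ i ∈ range r, ((X : R[X]) ^ (i + 1) - 1) ∣ ∏ i ∈ range r, ((X : R[X]) ^ (n - i) - 1) := by
  induction n generalizing r with
  | zero => cases r <;> simp [prod_range_succ']
  | succ n ih =>
    rcases r with _ | s
    · simp
    · rw [prod_range_X_pow_sub_sub_one_succ_succ]
      refine dvd_add ?_ (dvd_mul_of_dvd_right (ih (s + 1)) _)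
      rw [prod_range_succ (fun i ↦ (X : R[X]) ^ (i + 1) - 1)]
      exact mul_dvd_mul (ih s) dvd_rfl

theorem monic_prod_range_X_pow_succ_sub_one [Nontrivial R] (r : ℕ) :
    (∏ i ∈ range r, ((X : R[X]) ^ (i + 1) - 1)).Monic :=
  monic_prod_of_monic _ _ fun i _ ↦ by simpa using monic_X_pow_sub_C (1 : R) i.succ_ne_zero

theorem prod_range_X_pow_mul_sub_sub_one_reflect {m j k : ℕ} (hjk : j < k) :
    ∏ b ∈ range m, ((X : R[X]) ^ (k * m - (j * m + b)) - 1) =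
      ∏ b ∈ range m, ((X : R[X]) ^ ((k - 1 - j) * m + b + 1) - 1) := by
  rw [← prod_range_reflect]
  refine prod_congr rfl fun b hb ↦ ?_
  obtain ⟨c, rfl⟩ : ∃ c, k = j + 1 + c := ⟨k - (j + 1), by omega⟩
  have hb := mem_range.1 hb
  have hkm : (j + 1 + c) * m = j * m + c * m + m := by ring
  rw [hkm, show j + 1 + c - 1 - j = c by omega]
  congr 2
  omega

theorem exists_prod_range_X_pow_sub_one_eq_mul {ζ : R} {m : ℕ} (hm : 0 < m) (hζ : ζ ^ m = 1)
    (c : ℕ) :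
    ∃ W : ℤ[X], ∏ b ∈ range m, ((X : ℤ[X]) ^ (c * m + b + 1) - 1) = (X ^ m - 1) * W ∧
      aeval ζ W = (c + 1) * ∏ b ∈ range (m - 1), (ζ ^ (b + 1) - 1) := by
  obtain ⟨m, rfl⟩ : ∃ m', m = m' + 1 := ⟨m - 1, by omega⟩
  refine ⟨(∏ b ∈ range m, ((X : ℤ[X]) ^ (c * (m + 1) + b + 1) - 1)) *
    ∑ i ∈ range (c + 1), (X ^ (m + 1)) ^ i, ?_, ?_⟩
  · rw [prod_range_succ, show c * (m + 1) + m + 1 = (m + 1) * (c + 1) by ring, pow_mul,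
      ← geom_sum_mul]
    ring
  · have hpow (b : ℕ) : ζ ^ (c * (m + 1) + b + 1) = ζ ^ (b + 1) := by
      rw [add_assoc, pow_add, mul_comm c, pow_mul, hζ, one_pow, one_mul]
    simp only [map_mul, map_prod, map_sum, map_sub, map_pow, aeval_X, map_one, hpow, hζ, one_pow,
      sum_const, card_range, nsmul_eq_mul, mul_one, Nat.add_sub_cancel]
    push_cast
    ring

end Products

theorem prod_range_mul_gaussBinomial (n r : ℕ) :
    (∏ i ∈ range r, ((X : ℤ[X]) ^ (i + 1) - 1)) * gaussBinomial n r =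
      ∏ i ∈ range r, ((X : ℤ[X]) ^ (n - i) - 1) := by
  set D := ∏ i ∈ range r, ((X : ℤ[X]) ^ (i + 1) - 1)
  set N := ∏ i ∈ range r, ((X : ℤ[X]) ^ (n - i) - 1)
  have hmod : N %ₘ D = 0 :=
    (modByMonic_eq_zero_iff_dvd (monic_prod_range_X_pow_succ_sub_one r)).2
      (prod_range_X_pow_succ_sub_one_dvd n r)
  have hdiv := modByMonic_add_div N D
  rwa [hmod, zero_add] at hdiv

theorem gaussBinomial_zero_right (n : ℕ) : gaussBinomial n 0 = 1 := by
  simpa using prod_range_mul_gaussBinomial n 0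

theorem gaussBinomial_eq_zero_of_lt {n r : ℕ} (h : n < r) : gaussBinomial n r = 0 := by
  have hprod := prod_range_mul_gaussBinomial n r
  rwa [prod_range_X_pow_sub_sub_one_eq_zero h,
    mul_eq_zero_iff_left (monic_prod_range_X_pow_succ_sub_one r).ne_zero] at hprod

theorem gaussBinomial_add_mul_prod_range (n r s : ℕ) :
    gaussBinomial n (r + s) * ∏ b ∈ range s, ((X : ℤ[X]) ^ (r + b + 1) - 1) =
      gaussBinomial n r * ∏ b ∈ range s, ((X : ℤ[X]) ^ (n - (r + b)) - 1) := by
  refine mul_left_cancel₀ (monic_prod_range_X_pow_succ_sub_one r).ne_zero ?_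
  calc (∏ i ∈ range r, ((X : ℤ[X]) ^ (i + 1) - 1)) *
        (gaussBinomial n (r + s) * ∏ b ∈ range s, ((X : ℤ[X]) ^ (r + b + 1) - 1))
      = (∏ i ∈ range (r + s), ((X : ℤ[X]) ^ (i + 1) - 1)) * gaussBinomial n (r + s) := by
        rw [prod_range_add]; ring
    _ = ∏ i ∈ range (r + s), ((X : ℤ[X]) ^ (n - i) - 1) := prod_range_mul_gaussBinomial n (r + s)
    _ = (∏ i ∈ range r, ((X : ℤ[X]) ^ (n - i) - 1)) *
          ∏ b ∈ range s, ((X : ℤ[X]) ^ (n - (r + b)) - 1) := prod_range_add _ r s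
    _ = _ := by rw [← prod_range_mul_gaussBinomial n r]; ring

section RootsOfUnity

variable {K : Type*} [CommRing K] [IsDomain K] {ζ : K} {m : ℕ}

theorem IsPrimitiveRoot.prod_range_pow_succ_sub_one_ne_zero (hζ : IsPrimitiveRoot ζ m) :
    ∏ b ∈ range (m - 1), (ζ ^ (b + 1) - 1) ≠ 0 :=
  prod_ne_zero_iff.2 fun b hb ↦
    sub_ne_zero.2 (hζ.pow_ne_one_of_pos_of_lt b.succ_ne_zero (by have := mem_range.1 hb; omega))

theorem IsPrimitiveRoot.succ_mul_aeval_gaussBinomial (hζ : IsPrimitiveRoot ζ m) (hm : 0 < m)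
    {j k : ℕ} (hjk : j < k) :
    (j + 1 : K) * aeval ζ (gaussBinomial (k * m) ((j + 1) * m)) =
      (k - j : ℕ) * aeval ζ (gaussBinomial (k * m) (j * m)) := by
  obtain ⟨U, hU, hUζ⟩ := exists_prod_range_X_pow_sub_one_eq_mul hm hζ.pow_eq_one j
  obtain ⟨V, hV, hVζ⟩ := exists_prod_range_X_pow_sub_one_eq_mul hm hζ.pow_eq_one (k - 1 - j)
  have hshift := gaussBinomial_add_mul_prod_range (k * m) (j * m) m
  rw [prod_range_X_pow_mul_sub_sub_one_reflect hjk, hU, hV, ← add_one_mul,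
    mul_left_comm, mul_left_comm (gaussBinomial _ _)] at hshift
  have hζshift := congrArg (aeval ζ) (mul_left_cancel₀ (X_pow_sub_C_ne_zero hm (1 : ℤ)) hshift)
  rw [map_mul, map_mul, hUζ, hVζ] at hζshift
  rw [show k - j = k - 1 - j + 1 by omega, Nat.cast_succ]
  refine mul_right_cancel₀ hζ.prod_range_pow_succ_sub_one_ne_zero ?_
  linear_combination hζshift

theorem IsPrimitiveRoot.aeval_gaussBinomial_mul_of_charZero [CharZero K]
    (hζ : IsPrimitiveRoot ζ m) (hm : 0 < m) (k j : ℕ) :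
    aeval ζ (gaussBinomial (k * m) (j * m)) = k.choose j := by
  rcases lt_or_ge k j with hkj | hjk
  · rw [gaussBinomial_eq_zero_of_lt (Nat.mul_lt_mul_of_pos_right hkj hm), map_zero,
      Nat.choose_eq_zero_of_lt hkj, Nat.cast_zero]
  induction j with
  | zero => simp [gaussBinomial_zero_right]
  | succ j ih =>
    have hstep := hζ.succ_mul_aeval_gaussBinomial hm hjk
    rw [ih (by omega)] at hstep
    refine mul_left_cancel₀ (Nat.cast_add_one_ne_zero j) (hstep.trans ?_)
    exact_mod_cast by rw [mul_comm, ← Nat.choose_succ_right_eq, mul_comm]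

end RootsOfUnity

theorem cyclotomic_dvd_gaussBinomial_mul_sub_choose {m : ℕ} (hm : 0 < m) (k j : ℕ) :
    cyclotomic m ℤ ∣ gaussBinomial (k * m) (j * m) - k.choose j := by
  have hζ := Complex.isPrimitiveRoot_exp m hm.ne'
  rw [cyclotomic_eq_minpoly hζ hm]
  exact minpoly.isIntegrallyClosed_dvd (hζ.isIntegral hm)
    (by simp [hζ.aeval_gaussBinomial_mul_of_charZero hm])

/-- If `q` is a primitive `m`-th root of unity in a field `F`, then for all `k, j ≥ 0` the
Gaussian binomial coefficient `[km choose jm]_q` equals the ordinary binomial coefficient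
`C(k,j)`, as an element of `F`. -/
theorem gaussBinomial_mul_primitiveRoot_eq_choose {F : Type*} [Field F]
    (m : ℕ) (hm : 0 < m) (q : F) (hq : IsPrimitiveRoot q m) (k j : ℕ) :
    Polynomial.aeval q (gaussBinomial (k * m) (j * m)) = (Nat.choose k j : F) := by
  obtain ⟨W, hW⟩ := cyclotomic_dvd_gaussBinomial_mul_sub_choose hm k j
  have hroot : aeval q (cyclotomic m ℤ) = 0 := by
    simpa [aeval_def, eval₂_eq_eval_map] using hq.isRoot_cyclotomic hm
  rw [← sub_eq_zero, ← map_natCast (aeval (R := ℤ) q), ← map_sub, hW, map_mul, hroot, zero_mul]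
end

section
/- Let S be a ring with J(S) ≠ S, let R = ⊕_{i∈ℤ} S_i where each S_i = S, and let σ : R → R be the shift automorphism σ(Σ_{i∈ℤ} a_i) = Σ_{i∈ℤ} a_{i−1}. Then J(R[x;σ]) ≠ J(R)[x;σ]; indeed there exists r ∈ R with r ∉ J(R) but r·x ∈ J(R[x;σ]). -/
open Pointwise

/-- The (possibly non-unital) ring of finitely supported functions `ℤ → S`, i.e. the direct
sum `⊕_{i ∈ ℤ} S_i` with `S_i = S`, as a non-unital subring of the product `ℤ → S`. -/
def finSupport (S : Type*) [NonUnitalRing S] : NonUnitalSubring (ℤ → S) where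
  carrier := {f | (Function.support f).Finite}
  add_mem' := fun hf hg => (Set.Finite.union hf hg).subset (Function.support_add _ _)
  zero_mem' := by simp [Function.support_zero]
  neg_mem' := fun hf => by simpa [Function.support_neg] using hf
  mul_mem' := fun hf _ => hf.subset (Function.support_mul_subset_left _ _)

/-- `T` is (a copy of) the skew polynomial ring of automorphism type `R[x;σ]` over the
(possibly non-unital) ring `R`: `mono i a` is the monomial `a·xⁱ`, every element of `T` is
uniquely a polynomial `Σᵢ mono i aᵢ`, and `(a·xⁱ)(b·xʲ) = (a·σⁱ(b))·x^{i+j}`. -/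
structure IsSkewPolyRing {R T : Type*} [NonUnitalRing R] [NonUnitalRing T]
    (σ : R → R) (mono : ℕ → R → T) : Prop where
  σ_add : ∀ a b : R, σ (a + b) = σ a + σ b
  σ_mul : ∀ a b : R, σ (a * b) = σ a * σ b
  σ_bij : Function.Bijective σ
  mono_add : ∀ (i : ℕ) (a b : R), mono i (a + b) = mono i a + mono i b
  mono_mul : ∀ (i j : ℕ) (a b : R), mono i a * mono j b = mono (i + j) (a * σ^[i] b)
  repr : ∀ t : T, ∃ c : ℕ →₀ R, t = c.sum fun i a => mono i a
  uniq : ∀ c : ℕ →₀ R, (c.sum fun i a => mono i a) = 0 → c = 0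

/-- The Jacobson radical of a possibly non-unital ring `A`: the union of all quasi-regular
two-sided ideals of `A`. -/
def nuJacobson (A : Type*) [NonUnitalRing A] : Set A :=
  ⋃₀ {I : Set A | 0 ∈ I ∧ (∀ x ∈ I, ∀ y ∈ I, x + y ∈ I) ∧ (∀ x ∈ I, -x ∈ I) ∧
      (∀ x ∈ I, ∀ a : A, a * x ∈ I ∧ x * a ∈ I) ∧
      ∀ x ∈ I, ∃ y : A, x + y + x * y = 0 ∧ x + y + y * x = 0}

/-- `mulNPow A k` is the set of all products of `k + 1` elements of `A` (pointwise set
multiplication). -/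
def mulNPow {T : Type*} [Mul T] (A : Set T) : ℕ → Set T
  | 0 => A
  | k + 1 => A * mulNPow A k

/-! If `s ∉ J(S)`, the element `r ∈ R` equal to `s` at `0` and zero elsewhere is not in `J(R)`:
evaluation at `0` is a surjective ring map, and surjective maps carry quasi-regular ideals to
quasi-regular ideals. On the other hand, the skew polynomials `Σ cₖxᵏ` with `supp cₖ ⊆ [0, k)` form
a two-sided ideal of `R[x;σ]` with zero multiplication: in `(a xʲ)(b xᵏ) = (a σʲ(b)) x^{j+k}` the
shift moves `supp b` into `[j, j+k)`, away from `supp a ⊆ [0, j)`. A square-zero ideal is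
quasi-regular (`-t` is a quasi-inverse of `t`), so this ideal lies in `J(R[x;σ])`; it contains
`r x`, whose coefficient `r` is not in `J(R)`. -/

open Function

section Jacobson

variable {A B : Type*} [NonUnitalRing A] [NonUnitalRing B]

def IsQuasiRegularIdeal (I : Set A) : Prop :=
  0 ∈ I ∧ (∀ x ∈ I, ∀ y ∈ I, x + y ∈ I) ∧ (∀ x ∈ I, -x ∈ I) ∧
    (∀ x ∈ I, ∀ a : A, a * x ∈ I ∧ x * a ∈ I) ∧
    ∀ x ∈ I, ∃ y : A, x + y + x * y = 0 ∧ x + y + y * x = 0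

theorem IsQuasiRegularIdeal.subset_nuJacobson {I : Set A} (hI : IsQuasiRegularIdeal I) :
    I ⊆ nuJacobson A :=
  fun _ hx => ⟨I, hI, hx⟩

theorem isQuasiRegularIdeal_of_mul_self_eq_zero (I : AddSubgroup A)
    (hmul : ∀ x ∈ I, ∀ a : A, a * x ∈ I ∧ x * a ∈ I) (hsq : ∀ x ∈ I, x * x = 0) :
    IsQuasiRegularIdeal (I : Set A) := by
  refine ⟨I.zero_mem, fun _ hx _ hy => I.add_mem hx hy, fun _ hx => I.neg_mem hx, hmul,
    fun x hx => ⟨-x, ?_, ?_⟩⟩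
  · rw [mul_neg, hsq x hx, neg_zero, add_neg_cancel, add_zero]
  · rw [neg_mul, hsq x hx, neg_zero, add_neg_cancel, add_zero]

theorem IsQuasiRegularIdeal.image {I : Set A} (hI : IsQuasiRegularIdeal I) (f : A →ₙ+* B)
    (hf : Surjective f) : IsQuasiRegularIdeal (f '' I) := by
  obtain ⟨h0, hadd, hneg, hmul, hqr⟩ := hI
  refine ⟨⟨0, h0, map_zero f⟩, ?_, ?_, ?_, ?_⟩
  · rintro _ ⟨x, hx, rfl⟩ _ ⟨y, hy, rfl⟩
    exact ⟨x + y, hadd x hx y hy, map_add f x y⟩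
  · rintro _ ⟨x, hx, rfl⟩
    exact ⟨-x, hneg x hx, map_neg f x⟩
  · rintro _ ⟨x, hx, rfl⟩ b
    obtain ⟨a, rfl⟩ := hf b
    exact ⟨⟨a * x, (hmul x hx a).1, map_mul f a x⟩, ⟨x * a, (hmul x hx a).2, map_mul f x a⟩⟩
  · rintro _ ⟨x, hx, rfl⟩
    obtain ⟨y, hy₁, hy₂⟩ := hqr x hx
    refine ⟨f y, ?_, ?_⟩
    · simpa only [map_add, map_mul, map_zero] using congrArg f hy₁
    · simpa only [map_add, map_mul, map_zero] using congrArg f hy₂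

theorem map_mem_nuJacobson_of_surjective (f : A →ₙ+* B) (hf : Surjective f) {x : A}
    (hx : x ∈ nuJacobson A) : f x ∈ nuJacobson B := by
  obtain ⟨I, hI, hxI⟩ := hx
  exact (IsQuasiRegularIdeal.image hI f hf).subset_nuJacobson ⟨x, hxI, rfl⟩

end Jacobson

namespace IsSkewPolyRing

variable {R T : Type*} [NonUnitalRing R] [NonUnitalRing T] {σ : R → R} {mono : ℕ → R → T}
  (hT : IsSkewPolyRing σ mono)
include hT

theorem mono_zero (i : ℕ) : mono i 0 = 0 :=
  (AddMonoidHom.mk' (mono i) (hT.mono_add i)).map_zero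

noncomputable def sumHom : (ℕ →₀ R) →+ T :=
  Finsupp.liftAddHom fun i => AddMonoidHom.mk' (mono i) (hT.mono_add i)

theorem sumHom_apply (c : ℕ →₀ R) : hT.sumHom c = c.sum fun i a => mono i a :=
  Finsupp.liftAddHom_apply _ c

theorem sumHom_single (k : ℕ) (a : R) : hT.sumHom (Finsupp.single k a) = mono k a :=
  Finsupp.liftAddHom_apply_single _ k a

theorem sumHom_surjective : Surjective hT.sumHom := fun t => by
  obtain ⟨c, rfl⟩ := hT.repr t
  exact ⟨c, hT.sumHom_apply c⟩

theorem sumHom_injective : Injective hT.sumHom :=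
  (injective_iff_map_eq_zero _).mpr fun c hc => hT.uniq c (hT.sumHom_apply c ▸ hc)

theorem eq_single_of_mono_eq_sum {k : ℕ} {a : R} {c : ℕ →₀ R}
    (h : mono k a = c.sum fun i a => mono i a) : c = Finsupp.single k a :=
  hT.sumHom_injective (by rw [sumHom_apply, sumHom_single, h])

theorem sumHom_mul_sumHom (c d : ℕ →₀ R) :
    hT.sumHom c * hT.sumHom d = c.sum fun j a => d.sum fun k b => mono (j + k) (a * σ^[j] b) := by
  rw [sumHom_apply, sumHom_apply, Finsupp.sum_mul]
  simp only [Finsupp.mul_sum, hT.mono_mul]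

def polysWithCoeffsIn (W : ℕ → AddSubgroup R) : AddSubgroup T where
  carrier := {t | ∃ c : ℕ →₀ R, (∀ k, c k ∈ W k) ∧ hT.sumHom c = t}
  zero_mem' := ⟨0, fun k => (W k).zero_mem, map_zero _⟩
  add_mem' := by
    rintro _ _ ⟨c, hc, rfl⟩ ⟨d, hd, rfl⟩
    exact ⟨c + d, fun k => (W k).add_mem (hc k) (hd k), map_add _ c d⟩
  neg_mem' := by
    rintro _ ⟨c, hc, rfl⟩
    exact ⟨-c, fun k => (W k).neg_mem (hc k), map_neg _ c⟩

variable {W : ℕ → AddSubgroup R}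

theorem mono_mem_polysWithCoeffsIn {k : ℕ} {a : R} (ha : a ∈ W k) :
    mono k a ∈ hT.polysWithCoeffsIn W := by
  refine ⟨Finsupp.single k a, fun i => ?_, hT.sumHom_single k a⟩
  rcases eq_or_ne k i with rfl | hki
  · rwa [Finsupp.single_eq_same]
  · rw [Finsupp.single_eq_of_ne hki.symm]
    exact (W i).zero_mem

theorem mul_mem_polysWithCoeffsIn
    (hleft : ∀ j k a b, b ∈ W k → a * σ^[j] b ∈ W (j + k))
    (hright : ∀ j k a b, a ∈ W j → a * σ^[j] b ∈ W (j + k)) :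
    ∀ t ∈ hT.polysWithCoeffsIn W, ∀ a : T,
      a * t ∈ hT.polysWithCoeffsIn W ∧ t * a ∈ hT.polysWithCoeffsIn W := by
  rintro _ ⟨c, hc, rfl⟩ a
  obtain ⟨d, rfl⟩ := hT.sumHom_surjective a
  rw [hT.sumHom_mul_sumHom, hT.sumHom_mul_sumHom]
  exact ⟨AddSubmonoidClass.finsuppSum_mem _ _ _ fun j _ => AddSubmonoidClass.finsuppSum_mem _ _ _
      fun k _ => hT.mono_mem_polysWithCoeffsIn (hleft j k _ _ (hc k)),
    AddSubmonoidClass.finsuppSum_mem _ _ _ fun j _ => AddSubmonoidClass.finsuppSum_mem _ _ _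
      fun k _ => hT.mono_mem_polysWithCoeffsIn (hright j k _ _ (hc j))⟩

theorem mul_eq_zero_of_mem_polysWithCoeffsIn
    (hzero : ∀ j k a b, a ∈ W j → b ∈ W k → a * σ^[j] b = 0) :
    ∀ s ∈ hT.polysWithCoeffsIn W, ∀ t ∈ hT.polysWithCoeffsIn W, s * t = 0 := by
  rintro _ ⟨c, hc, rfl⟩ _ ⟨d, hd, rfl⟩
  rw [hT.sumHom_mul_sumHom]
  refine Finset.sum_eq_zero fun j _ => Finset.sum_eq_zero fun k _ => ?_
  show mono (j + k) (c j * σ^[j] (d k)) = 0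
  rw [hzero j k _ _ (hc j) (hd k), hT.mono_zero]

theorem polysWithCoeffsIn_subset_nuJacobson
    (hleft : ∀ j k a b, b ∈ W k → a * σ^[j] b ∈ W (j + k))
    (hright : ∀ j k a b, a ∈ W j → a * σ^[j] b ∈ W (j + k))
    (hzero : ∀ j k a b, a ∈ W j → b ∈ W k → a * σ^[j] b = 0) :
    (hT.polysWithCoeffsIn W : Set T) ⊆ nuJacobson T :=
  (isQuasiRegularIdeal_of_mul_self_eq_zero _ (hT.mul_mem_polysWithCoeffsIn hleft hright)
    fun t ht => hT.mul_eq_zero_of_mem_polysWithCoeffsIn hzero t ht t ht).subset_nuJacobson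

end IsSkewPolyRing

namespace finSupport

variable {S : Type*} [NonUnitalRing S]

theorem coe_mul_apply (a b : finSupport S) (i : ℤ) :
    ((a * b : finSupport S) : ℤ → S) i = (a : ℤ → S) i * (b : ℤ → S) i :=
  rfl

def single (i : ℤ) (a : S) : finSupport S :=
  ⟨Pi.single i a, (Set.finite_singleton i).subset Pi.support_single_subset⟩

def evalHom (i : ℤ) : finSupport S →ₙ+* S :=
  (Pi.evalNonUnitalRingHom (fun _ : ℤ => S) i).comp (NonUnitalSubringClass.subtype (finSupport S))

theorem evalHom_single (i : ℤ) (a : S) : evalHom i (single i a) = a :=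
  Pi.single_eq_same (M := fun _ => S) i a

theorem evalHom_surjective (i : ℤ) : Surjective (evalHom (S := S) i) :=
  fun a => ⟨single i a, evalHom_single i a⟩

def window (k : ℕ) : AddSubgroup (finSupport S) where
  carrier := {f | support (f : ℤ → S) ⊆ Set.Ico 0 k}
  zero_mem' := by simp
  add_mem' ha hb := (support_add _ _).trans (Set.union_subset ha hb)
  neg_mem' ha := (support_neg _).trans_subset ha

theorem mem_window {k : ℕ} {f : finSupport S} :
    f ∈ window k ↔ ∀ i, (f : ℤ → S) i ≠ 0 → 0 ≤ i ∧ i < k :=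
  support_subset_iff

theorem single_zero_mem_window_one (a : S) : single 0 a ∈ window 1 :=
  Pi.support_single_subset.trans (by simp)

theorem mul_mem_window {j : ℕ} {a : finSupport S} (ha : a ∈ window j) (k : ℕ)
    (b : finSupport S) : a * b ∈ window (j + k) := by
  refine mem_window.mpr fun i hi => ?_
  have := mem_window.mp ha i (left_ne_zero_of_mul (by rwa [← coe_mul_apply]))
  omega

variable {σ : finSupport S → finSupport S}
  (hσ : ∀ (f : finSupport S) (i : ℤ), (σ f : ℤ → S) i = (f : ℤ → S) (i - 1))
include hσ

theorem iterate_shift_apply (n : ℕ) (f : finSupport S) (i : ℤ) :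
    (σ^[n] f : ℤ → S) i = (f : ℤ → S) (i - n) := by
  induction n generalizing i with
  | zero => simp
  | succ n ih =>
    rw [iterate_succ_apply', hσ, ih]
    push_cast
    ring_nf

theorem mul_iterate_shift_mem_window {j k : ℕ} (a : finSupport S) {b : finSupport S}
    (hb : b ∈ window k) : a * σ^[j] b ∈ window (j + k) := by
  refine mem_window.mpr fun i hi => ?_
  have hbi : (b : ℤ → S) (i - j) ≠ 0 := by
    rw [← iterate_shift_apply hσ]
    exact right_ne_zero_of_mul (by rwa [← coe_mul_apply])
  have := mem_window.mp hb _ hbi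
  omega

theorem mul_iterate_shift_eq_zero {j k : ℕ} {a b : finSupport S} (ha : a ∈ window j)
    (hb : b ∈ window k) : a * σ^[j] b = 0 := by
  refine Subtype.ext (funext fun i => ?_)
  show (a : ℤ → S) i * (σ^[j] b : ℤ → S) i = 0
  rw [iterate_shift_apply hσ]
  by_cases hai : (a : ℤ → S) i = 0
  · rw [hai, zero_mul]
  · have hij := (mem_window.mp ha i hai).2
    have hb0 : (b : ℤ → S) (i - j) = 0 := by
      by_contra h
      have := (mem_window.mp hb _ h).1
      omega
    rw [hb0, mul_zero]

end finSupport

/-- **Example (Bedi–Ram).** Let `S` be a ring with `J(S) ≠ S`, let `R = ⊕_{i∈ℤ} S_i` with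
`S_i = S`, and let `σ` be the shift automorphism. Then `J(R[x;σ]) ≠ J(R)[x;σ]`; indeed there
is `r ∈ R` with `r ∉ J(R)` but `r·x ∈ J(R[x;σ])`. -/
theorem shift_skewPolyRing_jacobson_ne {S T : Type*} [NonUnitalRing S] [NonUnitalRing T]
    (hS : nuJacobson S ≠ Set.univ)
    (σ : finSupport S → finSupport S)
    (hσ : ∀ (f : finSupport S) (i : ℤ), (σ f : ℤ → S) i = (f : ℤ → S) (i - 1))
    (mono : ℕ → finSupport S → T)
    (hT : IsSkewPolyRing σ mono) :
    nuJacobson T ≠ {t : T | ∃ c : ℕ →₀ finSupport S,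
        (∀ i : ℕ, c i ∈ nuJacobson (finSupport S)) ∧ t = c.sum fun i a => mono i a} ∧
      ∃ r : finSupport S, r ∉ nuJacobson (finSupport S) ∧ mono 1 r ∈ nuJacobson T := by
  obtain ⟨s, hs⟩ := (Set.ne_univ_iff_exists_notMem _).mp hS
  set r := finSupport.single 0 s
  have hr : r ∉ nuJacobson (finSupport S) := fun hr => hs <| finSupport.evalHom_single 0 s ▸
    map_mem_nuJacobson_of_surjective _ (finSupport.evalHom_surjective 0) hr
  have hrx : mono 1 r ∈ nuJacobson T :=
    hT.polysWithCoeffsIn_subset_nuJacobson (W := finSupport.window)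
      (fun _ _ a _ hb => finSupport.mul_iterate_shift_mem_window hσ a hb)
      (fun _ k _ b ha => finSupport.mul_mem_window ha k _)
      (fun _ _ _ _ ha hb => finSupport.mul_iterate_shift_eq_zero hσ ha hb)
      (hT.mono_mem_polysWithCoeffsIn (finSupport.single_zero_mem_window_one s))
  refine ⟨fun hJ => hr ?_, r, hr, hrx⟩
  obtain ⟨c, hcJ, hc⟩ := hJ ▸ hrx
  simpa [hT.eq_single_of_mono_eq_sum hc] using hcJ 1
end

section
/- Let R be an algebra (possibly without identity) over a field F, let σ be an automorphism of R, and let D be a σ-derivation on R. Let R* = R ⊕ F be the Dorroh extension of R over F, with multiplication (r₁,m₁)(r₂,m₂) = (r₁r₂ + m₂r₁ + m₁r₂, m₁m₂), and define σ*((r,m)) = (σ(r), m) and D*((r,m)) = (D(r), 0). Then σ* is an automorphism of R*, D* is a σ*-derivation on R*, and J(R*[x;σ*,D*]) = J(R[x;σ,D]). -/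
/-- `S` is (a copy of) the skew polynomial ring `R[x;σ,D]` as a set of polynomials:
`ι : R → S` is the inclusion of coefficients, `X ∈ S` is the variable, every element of `S` is
uniquely a polynomial `Σᵢ ι(aᵢ) * Xⁱ`, and multiplication is governed by
`X * a = σ(a) * X + D(a)`. (No axioms on `σ` and `D` themselves are imposed here.) -/
structure IsOreExtensionCarrier {R S : Type*} [Ring R] [Ring S]
    (σ : R → R) (D : R → R) (ι : R → S) (X : S) : Prop where
  ι_add : ∀ a b : R, ι (a + b) = ι a + ι b
  ι_mul : ∀ a b : R, ι (a * b) = ι a * ι b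
  ι_one : ι 1 = 1
  X_comm : ∀ a : R, X * ι a = ι (σ a) * X + ι (D a)
  repr : ∀ s : S, ∃ c : ℕ →₀ R, s = c.sum fun i a => ι a * X ^ i
  uniq : ∀ c : ℕ →₀ R, (c.sum fun i a => ι a * X ^ i) = 0 → c = 0

/-- The Jacobson radical of a (possibly non-unital) subring `T` of `S`: the union of all
quasi-regular two-sided ideals of `T` (quasi-inverses taken inside `T`). -/
def nuJacobsonIn {S : Type*} [Ring S] (T : Set S) : Set S :=
  ⋃₀ {I : Set S | I ⊆ T ∧ 0 ∈ I ∧ (∀ x ∈ I, ∀ y ∈ I, x + y ∈ I) ∧ (∀ x ∈ I, -x ∈ I) ∧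
      (∀ x ∈ I, ∀ t ∈ T, t * x ∈ I ∧ x * t ∈ I) ∧
      ∀ x ∈ I, ∃ y ∈ T, x + y + x * y = 0 ∧ x + y + y * x = 0}

/-!
Taking scalar parts of coefficients is a surjective ring homomorphism `R*[x;σ*,D*] → F[x]`
(`σ*` fixes and `D*` kills scalar parts), with kernel `R[x;σ,D]`. As `J(F[x]) = 0`, the radical
`J(R*[x;σ*,D*])` lies in this kernel. For any ideal `T ⊇ J(S)` of a ring `S` the radical of `T`
is `J(S)`: on the one hand `J(S)` is a quasi-regular ideal of `T`; on the other, if `a` lies in a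
quasi-regular ideal of `T` and `b ∈ S`, then `(ab)² = a(bab)` is quasi-regular, so `1 + ab` and
hence, by Jacobson's lemma, `1 + ba` is a unit.
-/

section JacobsonRadical

variable {S : Type*} [Ring S]

theorem isUnit_one_add_mul_comm {a b : S} (h : IsUnit (1 + a * b)) : IsUnit (1 + b * a) := by
  obtain ⟨u, hu⟩ := h
  refine isUnit_iff_exists.2 ⟨1 - b * ↑u⁻¹ * a, ?_, ?_⟩
  · calc (1 + b * a) * (1 - b * ↑u⁻¹ * a) = 1 + b * a - b * ((1 + a * b) * ↑u⁻¹) * a := by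
          noncomm_ring
      _ = 1 := by rw [← hu, Units.mul_inv]; noncomm_ring
  · calc (1 - b * ↑u⁻¹ * a) * (1 + b * a) = 1 + b * a - b * (↑u⁻¹ * (1 + a * b)) * a := by
          noncomm_ring
      _ = 1 := by rw [← hu, Units.inv_mul]; noncomm_ring

theorem isUnit_one_add_of_quasiInverse {x y : S} (h₁ : x + y + x * y = 0)
    (h₂ : x + y + y * x = 0) : IsUnit (1 + x) :=
  isUnit_iff_exists.2 ⟨1 + y,
    by rw [show (1 + x) * (1 + y) = 1 + (x + y + x * y) by noncomm_ring, h₁, add_zero],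
    by rw [show (1 + y) * (1 + x) = 1 + (x + y + y * x) by noncomm_ring, h₂, add_zero]⟩

theorem Ideal.mem_jacobson_bot_iff_isUnit_one_add_mul {x : S} :
    x ∈ (⊥ : Ideal S).jacobson ↔ ∀ y, IsUnit (1 + y * x) := by
  constructor
  · intro hx
    have leftInv : ∀ y, ∃ z, z * (1 + y * x) = 1 := fun y => by
      obtain ⟨z, hz⟩ := Ideal.mem_jacobson_iff.1 hx y
      rw [Ideal.mem_bot, sub_eq_zero] at hz
      exact ⟨z, by rw [mul_one_add, ← mul_assoc, add_comm, hz]⟩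
    intro y
    obtain ⟨z, hz⟩ := leftInv y
    -- `z = 1 - z y x` again has a left inverse, which must then be `1 + y x`
    have hz' : z = 1 + -(z * y) * x := by
      calc z = z * (1 + y * x) + -(z * y) * x := by noncomm_ring
        _ = 1 + -(z * y) * x := by rw [hz]
    obtain ⟨w, hw⟩ := leftInv (-(z * y))
    rw [← hz'] at hw
    obtain rfl : w = 1 + y * x := left_inv_eq_right_inv hw hz
    exact isUnit_iff_exists.2 ⟨z, hw, hz⟩
  · intro h
    refine Ideal.mem_jacobson_iff.2 fun y => ⟨↑(h y).unit⁻¹, ?_⟩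
    rw [Ideal.mem_bot, sub_eq_zero, mul_assoc, add_comm, ← mul_one_add]
    exact (h y).val_inv_mul

theorem nuJacobsonIn_subset_jacobson_bot {T : Set S} (hT : ∀ t ∈ T, ∀ s, s * t ∈ T ∧ t * s ∈ T) :
    nuJacobsonIn T ⊆ (⊥ : Ideal S).jacobson := by
  rintro x ⟨I, ⟨hIT, -, -, hneg, hmul, hquasi⟩, hxI⟩
  refine Ideal.mem_jacobson_bot_iff_isUnit_one_add_mul.2 fun y => isUnit_one_add_mul_comm ?_
  have hyxy : y * x * y ∈ T := (hT _ (hT x (hIT hxI) y).1 y).2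
  obtain ⟨v, -, h₁, h₂⟩ := hquasi _ (hneg _ (hmul x hxI _ hyxy).2)
  -- `(1 + x y)(1 - x y) = 1 - x (y x y)` and `x (y x y) ∈ I` is quasi-regular
  have hprod : IsUnit ((1 + x * y) * (1 - x * y)) := by
    convert isUnit_one_add_of_quasiInverse h₁ h₂ using 1; noncomm_ring
  have hcomm : Commute (1 + x * y) (1 - x * y) := by
    simp only [Commute, SemiconjBy]; noncomm_ring
  exact (hcomm.isUnit_mul_iff.1 hprod).1

theorem jacobson_bot_subset_nuJacobsonIn {T : Set S}
    (hJT : ((⊥ : Ideal S).jacobson : Set S) ⊆ T) :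
    ((⊥ : Ideal S).jacobson : Set S) ⊆ nuJacobsonIn T := by
  intro x hx
  refine ⟨_, ⟨hJT, zero_mem _, fun _ ha _ hb => add_mem ha hb, fun _ ha => neg_mem ha,
    fun a ha t _ => ⟨Ideal.mul_mem_left _ t ha, Ideal.mul_mem_right t _ ha⟩, fun a ha => ?_⟩, hx⟩
  obtain ⟨u, hu⟩ := Ideal.mem_jacobson_bot_iff_isUnit_one_add_mul.1 ha 1
  rw [one_mul] at hu
  have hy : (↑u⁻¹ - 1 : S) = -(a * ↑u⁻¹) := by
    rw [eq_neg_iff_add_eq_zero, sub_add_eq_add_sub, ← one_add_mul, ← hu, Units.mul_inv, sub_self]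
  refine ⟨↑u⁻¹ - 1, hy ▸ hJT (neg_mem (Ideal.mul_mem_right _ _ ha)), ?_, ?_⟩
  · calc a + (↑u⁻¹ - 1) + a * (↑u⁻¹ - 1) = (1 + a) * ↑u⁻¹ - 1 := by noncomm_ring
      _ = 0 := by rw [← hu, Units.mul_inv, sub_self]
  · calc a + (↑u⁻¹ - 1) + (↑u⁻¹ - 1) * a = ↑u⁻¹ * (1 + a) - 1 := by noncomm_ring
      _ = 0 := by rw [← hu, Units.inv_mul, sub_self]

theorem coe_jacobson_bot_eq_nuJacobsonIn_ker {P : Type*} [Ring P] (f : S →+* P)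
    (hf : Function.Surjective f) (hP : (⊥ : Ideal P).jacobson = ⊥) :
    ((⊥ : Ideal S).jacobson : Set S) = nuJacobsonIn (RingHom.ker f) := by
  have hJ : (⊥ : Ideal S).jacobson ≤ RingHom.ker f :=
    calc (⊥ : Ideal S).jacobson ≤ (Ideal.comap f ⊥).jacobson := Ideal.jacobson_mono bot_le
      _ = Ideal.comap f (⊥ : Ideal P).jacobson := (Ideal.comap_jacobson_of_surjective hf).symm
      _ = RingHom.ker f := by rw [hP]; rfl
  refine (jacobson_bot_subset_nuJacobsonIn hJ).antisymm (nuJacobsonIn_subset_jacobson_bot ?_)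
  intro t ht s
  simp_all [RingHom.mem_ker]

end JacobsonRadical

namespace Unitization

section Semiring

variable {F R A : Type*} [CommSemiring F] [NonUnitalSemiring R] [Module F R]
  [SMulCommClass F R R] [IsScalarTower F R R] [NonUnitalSemiring A] [Module F A]
  [SMulCommClass F A A] [IsScalarTower F A A]

def map (φ : R →ₙₐ[F] A) : Unitization F R →ₐ[F] Unitization F A :=
  lift ((inrNonUnitalAlgHom F A).comp φ)

theorem map_apply (φ : R →ₙₐ[F] A) (x : Unitization F R) :
    map φ x = inl x.fst + inr (φ x.snd) := by
  simp [map, algebraMap_eq_inl]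

theorem map_bijective {φ : R →ₙₐ[F] A} (hφ : Function.Bijective φ) :
    Function.Bijective (map φ) := by
  refine ⟨fun x y hxy => ?_, fun y => ?_⟩
  · simp only [map_apply] at hxy
    exact Unitization.ext (by simpa using congr_arg (·.fst) hxy)
      (hφ.1 (by simpa using congr_arg (·.snd) hxy))
  · obtain ⟨a, ha⟩ := hφ.2 y.snd
    exact ⟨inl y.fst + inr a, by ext <;> simp [map_apply, ha]⟩

end Semiring

variable {F R : Type*} [CommRing F] [NonUnitalRing R] [Module F R]
  [SMulCommClass F R R] [IsScalarTower F R R]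

theorem inr_apply_snd_mul {σ : R →ₙₐ[F] R} {δ : R →ₗ[F] R}
    (hδ : ∀ a b, δ (a * b) = σ a * δ b + δ a * b) (x y : Unitization F R) :
    (inr (δ (x * y).snd) : Unitization F R) = map σ x * inr (δ y.snd) + inr (δ x.snd) * y := by
  ext
  · simp
  · simp only [snd_mul, map_add, map_smul, hδ, inr_add, inr_smul, inr_mul, toProd_add,
      toProd_smul, Prod.snd_add, Prod.smul_snd, snd_inr, fst_inr, zero_smul, add_zero, zero_add,
      map_apply, Prod.fst_add, fst_inl, snd_inl]
    abel

end Unitization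

noncomputable section

namespace IsOreExtensionCarrier

open Polynomial

section Ring

variable {B S : Type*} [Ring B] [Ring S] {σ D : B → B} {ι : B → S} {x : S}
  (h : IsOreExtensionCarrier σ D ι x)
include h

theorem ι_zero : ι 0 = 0 := by
  simpa using h.ι_add 0 0

def ιAddHom : B →+ S := AddMonoidHom.mk' ι h.ι_add

def coeffEquiv : (ℕ →₀ B) ≃+ S :=
  AddEquiv.ofBijective
    (Finsupp.liftAddHom fun i => (AddMonoidHom.mulRight (x ^ i)).comp h.ιAddHom)
    ⟨(injective_iff_map_eq_zero _).2 h.uniq, fun s => (h.repr s).imp fun _ hc => hc.symm⟩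

theorem coeffEquiv_single (i : ℕ) (a : B) : h.coeffEquiv (Finsupp.single i a) = ι a * x ^ i :=
  Finsupp.liftAddHom_apply_single _ i a

theorem induction_on {p : S → Prop} (s : S) (zero : p 0) (add : ∀ s t, p s → p t → p (s + t))
    (monomial : ∀ (a : B) (i : ℕ), p (ι a * x ^ i)) : p s := by
  obtain ⟨c, rfl⟩ := h.coeffEquiv.surjective s
  induction c using Finsupp.induction_linear with
  | zero => simpa using zero
  | add c d hc hd => simpa using add _ _ hc hd
  | single i a => simpa [coeffEquiv_single] using monomial a i

theorem var_mul_ι_mul_var_pow (a : B) (i : ℕ) :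
    x * (ι a * x ^ i) = ι (σ a) * x ^ (i + 1) + ι (D a) * x ^ i := by
  rw [← mul_assoc, h.X_comm, add_mul, mul_assoc, ← pow_succ']

end Ring

section Unitization

variable {F R S : Type*} [CommRing F] [NonUnitalRing R] [Module F R] [SMulCommClass F R R]
  [IsScalarTower F R R] [Ring S]

def scalarPoly : (ℕ →₀ Unitization F R) →+ F[X] :=
  Finsupp.liftAddHom fun i => (monomial i).toAddMonoidHom.comp (Unitization.fstHom F R)

theorem scalarPoly_single (i : ℕ) (a : Unitization F R) :
    scalarPoly (Finsupp.single i a) = monomial i a.fst :=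
  Finsupp.liftAddHom_apply_single _ i a

theorem coeff_scalarPoly (c : ℕ →₀ Unitization F R) (k : ℕ) :
    (scalarPoly c).coeff k = (c k).fst := by
  induction c using Finsupp.induction_linear with
  | zero => simp
  | add c d hc hd => simp [hc, hd]
  | single i a =>
    rw [scalarPoly_single, coeff_monomial, Finsupp.single_apply]
    split_ifs <;> simp

variable {σ D : Unitization F R → Unitization F R} {ι : Unitization F R → S} {x : S}
  (h : IsOreExtensionCarrier σ D ι x)
include h

def scalarPart : S →+ F[X] := scalarPoly.comp h.coeffEquiv.symm.toAddMonoidHom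

theorem scalarPart_coeffEquiv (c : ℕ →₀ Unitization F R) :
    h.scalarPart (h.coeffEquiv c) = scalarPoly c := by
  simp [scalarPart]

theorem scalarPart_monomial (a : Unitization F R) (i : ℕ) :
    h.scalarPart (ι a * x ^ i) = monomial i a.fst := by
  rw [← h.coeffEquiv_single, scalarPart_coeffEquiv, scalarPoly_single]

theorem scalarPart_ι_mul (a : Unitization F R) (s : S) :
    h.scalarPart (ι a * s) = C a.fst * h.scalarPart s := by
  induction s using h.induction_on with
  | zero => simp
  | add s t hs ht => simp [mul_add, hs, ht]
  | monomial b i =>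
    rw [← mul_assoc, ← h.ι_mul, scalarPart_monomial, scalarPart_monomial, C_mul_monomial,
      Unitization.fst_mul]

theorem scalarPart_one : h.scalarPart 1 = 1 := by
  simpa [h.ι_one] using h.scalarPart_monomial 1 0

theorem scalarPart_surjective : Function.Surjective h.scalarPart := by
  intro p
  induction p using Polynomial.induction_on' with
  | add p q hp hq =>
    obtain ⟨s, rfl⟩ := hp
    obtain ⟨t, rfl⟩ := hq
    exact ⟨s + t, map_add _ s t⟩
  | monomial i a => exact ⟨ι (Unitization.inl a) * x ^ i, by simp [h.scalarPart_monomial]⟩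

theorem scalarPart_eq_zero_iff (s : S) :
    h.scalarPart s = 0 ↔ ∃ c : ℕ →₀ R, s = c.sum fun i a => ι (Unitization.inr a) * x ^ i := by
  constructor
  · intro hs
    obtain ⟨c, rfl⟩ := h.coeffEquiv.surjective s
    have hfst : ∀ k, (c k).fst = 0 := fun k => by
      rw [← coeff_scalarPoly, ← h.scalarPart_coeffEquiv, hs, coeff_zero]
    refine ⟨c.mapRange (fun u : Unitization F R => u.snd) Unitization.snd_zero, ?_⟩
    rw [Finsupp.sum_mapRange_index fun i => by rw [Unitization.inr_zero, h.ι_zero, zero_mul]]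
    refine (Finsupp.liftAddHom_apply _ _).trans (Finsupp.sum_congr fun k _ => ?_)
    have hck : Unitization.inr (c k).snd = c k := Unitization.ext (by simp [hfst]) rfl
    simp [ιAddHom, hck]
  · rintro ⟨c, rfl⟩
    simp [map_finsuppSum, scalarPart_monomial]

variable (hσ : ∀ u, (σ u).fst = u.fst) (hD : ∀ u, (D u).fst = 0)
include hσ hD

theorem scalarPart_var_mul (s : S) : h.scalarPart (x * s) = X * h.scalarPart s := by
  induction s using h.induction_on with
  | zero => simp
  | add s t hs ht => simp [mul_add, hs, ht]
  | monomial a i =>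
    rw [h.var_mul_ι_mul_var_pow, map_add, scalarPart_monomial, scalarPart_monomial,
      scalarPart_monomial, hσ, hD, monomial_zero_right, add_zero, Polynomial.X_mul_monomial]

theorem scalarPart_var_pow_mul (n : ℕ) (s : S) :
    h.scalarPart (x ^ n * s) = X ^ n * h.scalarPart s := by
  induction n with
  | zero => simp
  | succ n ih => rw [pow_succ', mul_assoc, scalarPart_var_mul h hσ hD, ih, pow_succ', mul_assoc]

theorem scalarPart_mul (s t : S) : h.scalarPart (s * t) = h.scalarPart s * h.scalarPart t := by
  induction s using h.induction_on with
  | zero => simp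
  | add s s' hs hs' => simp [add_mul, hs, hs']
  | monomial a i =>
    rw [mul_assoc, scalarPart_ι_mul, scalarPart_var_pow_mul h hσ hD, scalarPart_monomial,
      ← C_mul_X_pow_eq_monomial, mul_assoc]

def scalarPartRingHom : S →+* F[X] :=
  { h.scalarPart with
    map_one' := h.scalarPart_one
    map_mul' := h.scalarPart_mul hσ hD }

end Unitization

end IsOreExtensionCarrier

end

/-- Let `R` be a (possibly non-unital) algebra over a field `F`, `σ` an automorphism of `R` and
`D` a `σ`-derivation. Let `R* = R ⊕ F` be the Dorroh extension (`Unitization F R`, with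
multiplication `(r₁,m₁)(r₂,m₂) = (r₁r₂ + m₂r₁ + m₁r₂, m₁m₂)`), and define
`σ*((r,m)) = (σ(r),m)` and `D*((r,m)) = (D(r),0)`. Then `σ*` is an automorphism of `R*`, `D*`
is a `σ*`-derivation on `R*`, and `J(R*[x;σ*,D*]) = J(R[x;σ,D])`, where `R[x;σ,D]` is the
non-unital subring of `R*[x;σ*,D*]` of polynomials with all coefficients in `R`. -/
theorem dorroh_extension_jacobson_eq {F R S : Type*} [Field F] [NonUnitalRing R]
    [Module F R] [SMulCommClass F R R] [IsScalarTower F R R] [Ring S]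
    (σ D : R → R)
    (hσadd : ∀ a b : R, σ (a + b) = σ a + σ b)
    (hσmul : ∀ a b : R, σ (a * b) = σ a * σ b)
    (hσsmul : ∀ (c : F) (a : R), σ (c • a) = c • σ a)
    (hσbij : Function.Bijective σ)
    (hDadd : ∀ a b : R, D (a + b) = D a + D b)
    (hDmul : ∀ a b : R, D (a * b) = σ a * D b + D a * b)
    (hDsmul : ∀ (c : F) (a : R), D (c • a) = c • D a)
    (σs Ds : Unitization F R → Unitization F R)
    (hσs : ∀ x : Unitization F R, σs x = Unitization.inl x.fst + Unitization.inr (σ x.snd))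
    (hDs : ∀ x : Unitization F R, Ds x = Unitization.inr (D x.snd))
    (ι : Unitization F R → S) (X : S)
    (hOre : IsOreExtensionCarrier σs Ds ι X) :
    (Function.Bijective σs ∧ σs 1 = 1 ∧
        (∀ x y : Unitization F R, σs (x + y) = σs x + σs y) ∧
        (∀ x y : Unitization F R, σs (x * y) = σs x * σs y)) ∧
      ((∀ x y : Unitization F R, Ds (x + y) = Ds x + Ds y) ∧
        (∀ x y : Unitization F R, Ds (x * y) = σs x * Ds y + Ds x * y)) ∧
      ((⊥ : Ideal S).jacobson : Set S) =
        nuJacobsonIn {s : S | ∃ c : ℕ →₀ R,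
          s = c.sum fun i a => ι (Unitization.inr a) * X ^ i} := by
  let σ' : R →ₙₐ[F] R :=
    { toFun := σ, map_smul' := hσsmul, map_zero' := by simpa using hσadd 0 0,
      map_add' := hσadd, map_mul' := hσmul }
  let δ : R →ₗ[F] R := { toFun := D, map_add' := hDadd, map_smul' := hDsmul }
  have hσs' : σs = Unitization.map σ' :=
    funext fun x => (hσs x).trans (Unitization.map_apply σ' x).symm
  have hDs' : Ds = fun x => Unitization.inr (δ x.snd) := funext hDs
  subst hσs' hDs'
  refine ⟨⟨Unitization.map_bijective hσbij, map_one _, map_add _, map_mul _⟩,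
    ⟨fun x y => by simp, Unitization.inr_apply_snd_mul hDmul⟩, ?_⟩
  let φ := hOre.scalarPartRingHom (fun u => by simp [Unitization.map_apply]) fun u => by simp
  have hker : {s : S | ∃ c : ℕ →₀ R, s = c.sum fun i a => ι (Unitization.inr a) * X ^ i} =
      RingHom.ker φ := Set.ext fun s => (hOre.scalarPart_eq_zero_iff s).symm
  rw [hker]
  exact coe_jacobson_bot_eq_nuJacobsonIn_ker φ hOre.scalarPart_surjective
    (Ideal.jacobson_bot_polynomial_of_jacobson_bot Ideal.jacobson_eq_self_of_isMaximal)
end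

section
/- Let R be a ring, let σ be an endomorphism of R, and let D be a σ-derivation on R. Then in R[x;σ,D], for every a ∈ R and every non-negative integer n, x^n·a = Σ_{m=0}^{n} ( Σ_{w} w(a) ) x^m, where for each m the inner sum runs over all words w in the maps σ and D of total length n containing exactly m occurrences of σ and n−m occurrences of D (i.e., deg_σ(w) = m and deg_D(w) = n−m), and w(a) denotes the corresponding composite applied to a. -/
/-- Apply a word in the two maps `σ` and `D` to an element: the letter `true` stands for `σ`
and `false` for `D`. -/
def wordApply {R : Type*} (σ D : R → R) : List Bool → R → R
  | [], a => a
  | b :: w, a => (if b then σ else D) (wordApply σ D w a)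

section Aux
set_option linter.unusedSectionVars false


variable {R : Type*} [Ring R] (σ D : R → R)

/-- coefficient: sum of all words of length n with m σ's applied to a -/
def oreCoeff (a : R) (n m : ℕ) : R :=
  ∑ w ∈ Finset.univ.filter
      (fun w : Fin n → Bool => (Finset.univ.filter (fun i => w i = true)).card = m),
    wordApply σ D (List.ofFn w) a

lemma ofFn_cons {n : ℕ} (b : Bool) (w : Fin n → Bool) :
    List.ofFn (Fin.cons b w) = b :: List.ofFn w := by
  rw [List.ofFn_succ]
  simp [Fin.cons_succ, Fin.cons_zero]

lemma card_cons {n : ℕ} (b : Bool) (w : Fin n → Bool) :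
    (Finset.univ.filter (fun i => (Fin.cons b w : Fin (n+1) → Bool) i = true)).card
      = (if b then 1 else 0) + (Finset.univ.filter (fun i => w i = true)).card := by
  rw [Finset.card_filter, Finset.card_filter, Fin.sum_univ_succ]
  simp [Fin.cons_succ, Fin.cons_zero]

lemma oreCoeff_eq_sum (a : R) (n m : ℕ) :
    oreCoeff σ D a n m = ∑ w : Fin n → Bool,
      if (Finset.univ.filter (fun i => w i = true)).card = m
        then wordApply σ D (List.ofFn w) a else 0 :=
  Finset.sum_filter _ _

lemma oreCoeff_eq_zero (a : R) {n m : ℕ} (h : n < m) : oreCoeff σ D a n m = 0 := by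
  rw [oreCoeff_eq_sum]
  apply Finset.sum_eq_zero
  intro w _
  rw [if_neg]
  intro hc
  have := Finset.card_filter_le (Finset.univ : Finset (Fin n)) (fun i => w i = true)
  simp [hc] at this
  omega

variable (hσ : ∀ a b : R, σ (a + b) = σ a + σ b) (hD : ∀ a b : R, D (a + b) = D a + D b)

include hσ hD in
lemma oreCoeff_succ_general (a : R) (n m : ℕ) :
    oreCoeff σ D a (n + 1) m =
      (∑ w : Fin n → Bool,
        if (Finset.univ.filter (fun i => w i = true)).card + 1 = m
          then σ (wordApply σ D (List.ofFn w) a) else 0)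
      + (∑ w : Fin n → Bool,
        if (Finset.univ.filter (fun i => w i = true)).card = m
          then D (wordApply σ D (List.ofFn w) a) else 0) := by
  rw [oreCoeff_eq_sum]
  rw [← Fintype.sum_equiv ((Fin.consEquiv (fun _ : Fin (n+1) => Bool)))
    (fun p : Bool × (Fin n → Bool) =>
      if (Finset.univ.filter (fun i => (Fin.cons p.1 p.2 : Fin (n+1) → Bool) i = true)).card = m
        then wordApply σ D (List.ofFn (Fin.cons p.1 p.2)) a else 0)
    _ (fun p => rfl)]
  rw [Fintype.sum_prod_type, Fintype.sum_bool]
  simp only [card_cons, ofFn_cons, wordApply, if_true, if_false]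
  simp [add_comm 1]

include hσ hD in
lemma oreCoeff_succ_succ (a : R) (n m : ℕ) :
    oreCoeff σ D a (n + 1) (m + 1)
      = σ (oreCoeff σ D a n m) + D (oreCoeff σ D a n (m + 1)) := by
  let σ' : R →+ R := AddMonoidHom.mk' σ hσ
  let D' : R →+ R := AddMonoidHom.mk' D hD
  have hσ' : σ = ⇑σ' := rfl
  have hD' : D = ⇑D' := rfl
  rw [oreCoeff_succ_general σ D hσ hD, oreCoeff_eq_sum, oreCoeff_eq_sum]
  rw [hσ', hD', map_sum, map_sum]
  simp [apply_ite σ', apply_ite D', Nat.succ_inj]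

include hσ hD in
lemma oreCoeff_succ_zero (a : R) (n : ℕ) :
    oreCoeff σ D a (n + 1) 0 = D (oreCoeff σ D a n 0) := by
  let D' : R →+ R := AddMonoidHom.mk' D hD
  have hD' : D = ⇑D' := rfl
  rw [oreCoeff_succ_general σ D hσ hD, oreCoeff_eq_sum]
  rw [hD', map_sum]
  simp [apply_ite D']

end Aux

/-- **Lemma (Greenfeld–Smoktunowicz–Ziembowski).** In `R[x;σ,D]`,
`xⁿ·a = Σ_{m=0}^{n} (Σ_w w(a)) xᵐ`, where the inner sum runs over all words `w` in `σ` and `D`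
of length `n` with exactly `m` occurrences of `σ` (and `n − m` occurrences of `D`). -/
theorem pow_mul_eq_sum_words {R S : Type*} [Ring R] [Ring S]
    (σ D : R → R) (ι : R → S) (X : S)
    (hOre : IsOreExtension σ D ι X)
    (a : R) (n : ℕ) :
    X ^ n * ι a = ∑ m ∈ Finset.range (n + 1),
      ι (∑ w ∈ Finset.univ.filter
            (fun w : Fin n → Bool => (Finset.univ.filter (fun i => w i = true)).card = m),
          wordApply σ D (List.ofFn w) a) * X ^ m := by
  have hσ := hOre.σ_add
  have hD := hOre.D_add
  have hι := hOre.ι_add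
  have hD0 : D 0 = 0 := by
    have h := hD 0 0; rw [add_zero] at h; exact (left_eq_add.mp h)
  have hι0 : ι 0 = 0 := by
    have h := hι 0 0; rw [add_zero] at h; exact (left_eq_add.mp h)
  show X ^ n * ι a = ∑ m ∈ Finset.range (n + 1), ι (oreCoeff σ D a n m) * X ^ m
  induction n with
  | zero =>
    simp [oreCoeff, wordApply]
  | succ n ih =>
    rw [pow_succ', mul_assoc, ih, Finset.mul_sum]
    have step : ∀ m, X * (ι (oreCoeff σ D a n m) * X ^ m)
        = ι (σ (oreCoeff σ D a n m)) * X ^ (m + 1) + ι (D (oreCoeff σ D a n m)) * X ^ m := by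
      intro m
      rw [← mul_assoc, hOre.X_comm, add_mul, mul_assoc, ← pow_succ']
    simp only [step]
    rw [Finset.sum_add_distrib]
    conv_rhs => rw [Finset.sum_range_succ' (fun m => ι (oreCoeff σ D a (n+1) m) * X ^ m) (n+1)]
    simp only [oreCoeff_succ_succ σ D hσ hD, oreCoeff_succ_zero σ D hσ hD, hι, add_mul]
    rw [Finset.sum_add_distrib]
    rw [add_assoc]
    congr 1
    rw [Finset.sum_range_succ' (fun m => ι (D (oreCoeff σ D a n m)) * X ^ m) n]
    conv_rhs => rw [Finset.sum_range_succ]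
    rw [oreCoeff_eq_zero σ D a (Nat.lt_succ_self n), hD0, hι0, zero_mul, add_zero]
end
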